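/- arXiv:1511.04291 — 3 statements merged into one kernel-verified Lean document; each statement's English description precedes it below -/
import Mathlib

section
/- Let n ≥ 1, m = 2n+1, and let G = S_m be the symmetric group on {1,...,m}. Let H = {g ∈ G : g permutes the set {{1,2},{3,4},...,{2n-1,2n}} of pairs}, i.e., the stabilizer of the partition into these n pairs together with the singleton {2n+1}, and let K = {g ∈ G : g({1,2}) = {1,2}} be the setwise stabilizer of {1,2}. Let Γ* = {g ∈ G : there exist 1 ≤ i, j ≤ n with g({2i-1,2i}) = {2j-1,2j}}. Then Γ* = H K H. -/
open scoped Pointwise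

/-- The Prüfer `p`-group, realized as the `p`-power torsion of `ℚ/ℤ`. -/
def Prufer (p : ℕ) : AddSubgroup (AddCircle (1 : ℚ)) where
  carrier := {x | ∃ n : ℕ, (p ^ n : ℕ) • x = 0}
  zero_mem' := ⟨0, smul_zero _⟩
  add_mem' := by
    rintro a b ⟨m, hm⟩ ⟨n, hn⟩
    refine ⟨m + n, ?_⟩
    have h1 : (p ^ (m + n) : ℕ) • a = 0 := by
      rw [show p ^ (m + n) = p ^ n * p ^ m by ring, mul_smul, hm, smul_zero]
    have h2 : (p ^ (m + n) : ℕ) • b = 0 := by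
      rw [show p ^ (m + n) = p ^ m * p ^ n by ring, mul_smul, hn, smul_zero]
    rw [smul_add, h1, h2, add_zero]
  neg_mem' := by
    rintro a ⟨m, hm⟩
    exact ⟨m, by rw [smul_neg, hm, neg_zero]⟩

/-- `T` is a discrete `p`-torus: isomorphic to a finite direct power of the Prüfer `p`-group. -/
def IsPTorus (p : ℕ) (T : Type*) [Group T] : Prop :=
  ∃ r : ℕ, Nonempty (T ≃* Multiplicative (Fin r → Prufer p))

/-- `G` is a discrete `p`-toral group: it has a normal discrete `p`-torus of `p`-power index. -/
def IsDiscretePToral (p : ℕ) (G : Type*) [Group G] : Prop :=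
  ∃ T : Subgroup G, T.Normal ∧ IsPTorus p ↥T ∧ ∃ k : ℕ, Nat.card (G ⧸ T) = p ^ k

/-- `G` is a virtually discrete `p`-toral group: it has a normal discrete `p`-torus of
finite index. -/
def IsVirtuallyDiscretePToral (p : ℕ) (G : Type*) [Group G] : Prop :=
  ∃ T : Subgroup G, T.Normal ∧ IsPTorus p ↥T ∧ Finite (G ⧸ T)

/-- A subgroup is discrete `p`-toral. -/
def IsDiscretePToralSubgroup (p : ℕ) {G : Type*} [Group G] (H : Subgroup G) : Prop :=
  IsDiscretePToral p ↥H

/-- A Sylow `p`-subgroup of a virtually discrete `p`-toral group: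
a maximal discrete `p`-toral subgroup. -/
def IsMaxDiscretePToralSubgroup (p : ℕ) {G : Type*} [Group G] (S : Subgroup G) : Prop :=
  IsDiscretePToralSubgroup p S ∧
    ∀ P : Subgroup G, IsDiscretePToralSubgroup p P → S ≤ P → P = S

/-- The identity component `Γ₀`: the (unique maximal) discrete `p`-torus subgroup,
realized as the subgroup generated by all discrete `p`-torus subgroups. -/
def identityComponent (p : ℕ) (G : Type*) [Group G] : Subgroup G :=
  ⨆ T ∈ {T : Subgroup G | IsPTorus p ↥T}, T

/-- `Ω_n(D)`: the subgroup of elements of order dividing `p ^ n`. -/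
def Omega (p n : ℕ) (D : Type*) [CommGroup D] : Subgroup D where
  carrier := {x | x ^ p ^ n = 1}
  one_mem' := one_pow _
  mul_mem' := by
    intro a b ha hb
    simp only [Set.mem_setOf_eq] at *
    rw [mul_pow, ha, hb, one_mul]
  inv_mem' := by
    intro a ha
    simp only [Set.mem_setOf_eq] at *
    rw [inv_pow, ha, inv_one]

/-- `D₀` is the maximal divisible subgroup of `D`. -/
def IsMaxDivisible {D : Type*} [CommGroup D] (D₀ : Subgroup D) : Prop :=
  (∀ x ∈ D₀, ∀ n : ℕ, n ≠ 0 → ∃ y ∈ D₀, y ^ n = x) ∧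
    ∀ E : Subgroup D, (∀ x ∈ E, ∀ n : ℕ, n ≠ 0 → ∃ y ∈ E, y ^ n = x) → E ≤ D₀

/-- The subgroup of points of `D` fixed by every element of `A ⊆ G`. -/
def fixedSub (G : Type*) [Group G] (D : Type*) [Group D] [MulDistribMulAction G D]
    (A : Set G) : Subgroup D where
  carrier := {x | ∀ a ∈ A, a • x = x}
  one_mem' := fun a _ => smul_one a
  mul_mem' := by
    intro x y hx hy a ha
    rw [smul_mul', hx a ha, hy a ha]
  inv_mem' := by
    intro x hx a ha
    rw [smul_inv', hx a ha]

/-- The commutator `[W, A]` of a subgroup `W ≤ D` with a set `A ⊆ G` acting on `D`. -/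
def actComm (G : Type*) [Group G] {D : Type*} [Group D] [MulDistribMulAction G D]
    (A : Set G) (W : Subgroup D) : Subgroup D :=
  Subgroup.closure {x | ∃ w ∈ W, ∃ a ∈ A, x = w⁻¹ * a • w}

/-- `R` is a set of representatives for the (left) cosets of `H` inside `K`. -/
def IsRelTransversal {G : Type*} [Group G] (H K : Subgroup G) (R : Finset G) : Prop :=
  (↑R : Set G) ⊆ (K : Set G) ∧ ∀ g ∈ K, ∃! r, r ∈ R ∧ r⁻¹ * g ∈ H

/-- `A` is an offender of `G` on `D` (relative to the identity component `D₀`). -/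
def IsOffender (p : ℕ) {G D : Type*} [Group G] [CommGroup D] [MulDistribMulAction G D]
    (D₀ : Subgroup D) (A : Subgroup G) : Prop :=
  IsPGroup p ↥A ∧ (∀ x ∈ A, ∀ y ∈ A, x * y = y * x) ∧
    D₀ ≤ fixedSub G D (A : Set G) ∧
    (fixedSub G D (A : Set G)).index ≠ 0 ∧
    (fixedSub G D (A : Set G)).index ≤ Nat.card A

/-- `A` is a best offender of `G` on `D` (relative to the identity component `D₀`). -/
def IsBestOffender (p : ℕ) {G D : Type*} [Group G] [CommGroup D] [MulDistribMulAction G D]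
    (D₀ : Subgroup D) (A : Subgroup G) : Prop :=
  IsPGroup p ↥A ∧ (∀ x ∈ A, ∀ y ∈ A, x * y = y * x) ∧
    D₀ ≤ fixedSub G D (A : Set G) ∧
    ∀ B : Subgroup G, B ≤ A →
      Nat.card B * D₀.relIndex (fixedSub G D (B : Set G)) ≤
        Nat.card A * D₀.relIndex (fixedSub G D (A : Set G))

/-- `A` is an over-offender of `G` on `D`. -/
def IsOverOffender (p : ℕ) {G D : Type*} [Group G] [CommGroup D] [MulDistribMulAction G D]
    (D₀ : Subgroup D) (A : Subgroup G) : Prop :=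
  IsBestOffender p D₀ A ∧
    D₀.index < Nat.card A * D₀.relIndex (fixedSub G D (A : Set G))

/-- `A` is a best offender of `G` on the invariant subgroup `W ≤ D` with identity
component `W₀`. -/
def IsBestOffenderOn (p : ℕ) {G D : Type*} [Group G] [CommGroup D] [MulDistribMulAction G D]
    (W₀ W : Subgroup D) (A : Subgroup G) : Prop :=
  IsPGroup p ↥A ∧ (∀ x ∈ A, ∀ y ∈ A, x * y = y * x) ∧
    W₀ ≤ W ⊓ fixedSub G D (A : Set G) ∧
    ∀ B : Subgroup G, B ≤ A →
      Nat.card B * W₀.relIndex (W ⊓ fixedSub G D (B : Set G)) ≤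
        Nat.card A * W₀.relIndex (W ⊓ fixedSub G D (A : Set G))

/-- `A` is an over-offender of `G` on the invariant subgroup `W ≤ D` with identity
component `W₀`. -/
def IsOverOffenderOn (p : ℕ) {G D : Type*} [Group G] [CommGroup D] [MulDistribMulAction G D]
    (W₀ W : Subgroup D) (A : Subgroup G) : Prop :=
  IsBestOffenderOn p W₀ W A ∧
    W₀.relIndex W < Nat.card A * W₀.relIndex (W ⊓ fixedSub G D (A : Set G))

/-! Let `B` be the set of pairs, `H` its setwise stabilizer and `K` the stabilizer of the pair
`x₀ = {0, 1}`. A product of two transpositions exchanges any two disjoint pairs and fixes all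
other points, so `H` is transitive on `B`. Hence if `g` maps `h • x₀` to `h' • x₀` with
`h, h' ∈ H`, then `h'⁻¹ g h ∈ K`; conversely `h₁ k h₂` maps `h₂⁻¹ • x₀ ∈ B` to `h₁ • x₀ ∈ B`. -/

namespace MulAction

variable {G X : Type*} [Group G] [MulAction G X]

theorem mem_stabilizer_range_iff {ι : Type*} [Finite ι] {P : ι → X} {g : G} :
    g ∈ stabilizer G (Set.range P) ↔ ∀ i, ∃ j, g • P i = P j := by
  rw [mem_stabilizer_set' (Set.finite_range P), Set.forall_mem_range]
  simp only [Set.mem_range, eq_comm]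

theorem setOf_exists_smul_mem_eq_stabilizer_mul {B : Set X} {x₀ : X} (hx₀ : x₀ ∈ B)
    (htrans : ∀ b ∈ B, ∃ h ∈ stabilizer G B, h • x₀ = b) :
    {g : G | ∃ b ∈ B, g • b ∈ B} =
      (stabilizer G B : Set G) * ((stabilizer G x₀ : Set G) * stabilizer G B) := by
  ext g
  simp only [Set.mem_mul, SetLike.mem_coe]
  constructor
  · rintro ⟨_, hb, hgb⟩
    obtain ⟨h, hh, rfl⟩ := htrans _ hb
    obtain ⟨h', hh', hh'x₀⟩ := htrans _ hgb
    refine ⟨h', hh', h'⁻¹ * g * h * h⁻¹, ⟨h'⁻¹ * g * h, ?_, h⁻¹, inv_mem hh, rfl⟩, by group⟩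
    rw [mem_stabilizer_iff, mul_smul, mul_smul, ← hh'x₀, inv_smul_smul]
  · rintro ⟨h₁, hh₁, _, ⟨k, hk, h₂, hh₂, rfl⟩, rfl⟩
    refine ⟨h₂⁻¹ • x₀, (mem_stabilizer_set.1 (inv_mem hh₂) x₀).2 hx₀, ?_⟩
    rw [mul_smul, mul_smul, smul_inv_smul, mem_stabilizer_iff.1 hk]
    exact (mem_stabilizer_set.1 hh₁ x₀).2 hx₀

end MulAction

namespace Equiv.Perm

open MulAction

variable {α : Type*} [DecidableEq α]

theorem smul_finset_eq_image (σ : Perm α) (s : Finset α) : σ • s = s.image σ := rfl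

theorem exists_smul_finset_swap_of_disjoint {s t : Finset α} (hs : s.card = 2) (ht : t.card = 2)
    (hst : _root_.Disjoint s t) :
    ∃ σ : Perm α, σ • s = t ∧ σ • t = s ∧ ∀ x, x ∉ s → x ∉ t → σ x = x := by
  obtain ⟨a, b, hab, rfl⟩ := Finset.card_eq_two.1 hs
  obtain ⟨c, d, hcd, rfl⟩ := Finset.card_eq_two.1 ht
  simp only [Finset.disjoint_insert_left, Finset.disjoint_insert_right,
    Finset.disjoint_singleton, Finset.mem_insert, Finset.mem_singleton, not_or] at hst
  obtain ⟨⟨hca, hcb⟩, had, hbd⟩ := hst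
  have hσa : (swap a c * swap b d) a = c := by
    rw [mul_apply, swap_apply_of_ne_of_ne hab had, swap_apply_left]
  have hσb : (swap a c * swap b d) b = d := by
    rw [mul_apply, swap_apply_left, swap_apply_of_ne_of_ne (Ne.symm had) (Ne.symm hcd)]
  have hσc : (swap a c * swap b d) c = a := by
    rw [mul_apply, swap_apply_of_ne_of_ne hcb hcd, swap_apply_right]
  have hσd : (swap a c * swap b d) d = b := by
    rw [mul_apply, swap_apply_right, swap_apply_of_ne_of_ne (Ne.symm hab) (Ne.symm hcb)]
  refine ⟨swap a c * swap b d, ?_, ?_, fun x hxs hxt => ?_⟩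
  · simp only [smul_finset_eq_image, Finset.image_insert, Finset.image_singleton, hσa, hσb]
  · simp only [smul_finset_eq_image, Finset.image_insert, Finset.image_singleton, hσc, hσd]
  · simp only [Finset.mem_insert, Finset.mem_singleton, not_or] at hxs hxt
    rw [mul_apply, swap_apply_of_ne_of_ne hxs.2 hxt.2, swap_apply_of_ne_of_ne hxs.1 hxt.1]

theorem exists_mem_stabilizer_smul_eq_of_pairwiseDisjoint {B : Set (Finset α)} (hB : B.Finite)
    (hcard : ∀ s ∈ B, s.card = 2) (hdisj : B.PairwiseDisjoint id) {s t : Finset α} (hs : s ∈ B)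
    (ht : t ∈ B) : ∃ σ ∈ stabilizer (Perm α) B, σ • s = t := by
  by_cases hst : s = t
  · exact ⟨1, one_mem _, by rw [one_smul, hst]⟩
  obtain ⟨σ, hσs, hσt, hσ⟩ :=
    exists_smul_finset_swap_of_disjoint (hcard s hs) (hcard t ht) (hdisj hs ht hst)
  refine ⟨σ, (mem_stabilizer_set' hB).2 fun u hu => ?_, hσs⟩
  by_cases hus : u = s
  · rwa [hus, hσs]
  by_cases hut : u = t
  · rwa [hut, hσt]
  have hσu : σ • u = u := by
    rw [smul_finset_eq_image]
    exact (Finset.image_congr fun x hx => hσ x (Finset.disjoint_left.1 (hdisj hu hs hus) hx)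
      (Finset.disjoint_left.1 (hdisj hu ht hut) hx)).trans Finset.image_id'
  rwa [hσu]

end Equiv.Perm

open scoped Pointwise in
/-- In `G = S_m`, `m = 2n+1`, with `H` the stabilizer of the
partition into the pairs `{2i-1, 2i}` (`1 ≤ i ≤ n`) and the singleton, and `K` the
setwise stabilizer of `{1,2}`, the set
`Γ* = {g : g maps some pair to some pair}` equals `H K H`. -/
theorem gammaStar_eq_HKH (n m : ℕ) (hn : 1 ≤ n) (hm : m = 2 * n + 1)
    (pair : Fin n → Finset (Fin m))
    (hpair : ∀ i : Fin n,
      pair i = {⟨2 * (i : ℕ), by have := i.isLt; omega⟩,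
                ⟨2 * (i : ℕ) + 1, by have := i.isLt; omega⟩}) :
    {g : Equiv.Perm (Fin m) | ∃ i j : Fin n, (pair i).image g = pair j} =
      {g : Equiv.Perm (Fin m) | ∀ i : Fin n, ∃ j : Fin n, (pair i).image g = pair j} *
        ({g : Equiv.Perm (Fin m) | (pair ⟨0, hn⟩).image g = pair ⟨0, hn⟩} *
          {g : Equiv.Perm (Fin m) | ∀ i : Fin n, ∃ j : Fin n, (pair i).image g = pair j}) := by
  have hcard : ∀ s ∈ Set.range pair, s.card = 2 := by
    rintro _ ⟨i, rfl⟩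
    rw [hpair]
    exact Finset.card_pair (by simp [Fin.ext_iff])
  have hdisj : (Set.range pair).PairwiseDisjoint id := by
    refine Pairwise.range_pairwise fun i j hij => Finset.disjoint_left.2 fun x hxi hxj => ?_
    have hij' : (i : ℕ) ≠ j := Fin.val_ne_of_ne hij
    simp only [id_eq, hpair, Finset.mem_insert, Finset.mem_singleton, Fin.ext_iff] at hxi hxj
    omega
  have hH : {g : Equiv.Perm (Fin m) | ∀ i, ∃ j, (pair i).image g = pair j} =
      MulAction.stabilizer (Equiv.Perm (Fin m)) (Set.range pair) := by
    ext g
    simp only [SetLike.mem_coe, MulAction.mem_stabilizer_range_iff, Equiv.Perm.smul_finset_eq_image]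
    rfl
  have hΓ : {g : Equiv.Perm (Fin m) | ∃ i j, (pair i).image g = pair j} =
      {g | ∃ s ∈ Set.range pair, g • s ∈ Set.range pair} := by
    ext g
    simp [Equiv.Perm.smul_finset_eq_image, eq_comm]
  rw [hΓ, hH]
  exact MulAction.setOf_exists_smul_mem_eq_stabilizer_mul (Set.mem_range_self _) fun _ ht =>
    Equiv.Perm.exists_mem_stabilizer_smul_eq_of_pairwiseDisjoint (Set.finite_range pair) hcard
      hdisj (Set.mem_range_self _) ht
end

section
/- Let G be a finite group acting faithfully on an abelian discrete 2-toral group D. Then for all sufficiently large n, the set of over-offenders of G on D coincides with the set of over-offenders of G on Ω_n(D). -/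
open scoped Pointwise

/-!
Since `D / D₀` is a finite `2`-group and `D₀` is divisible, `D = Ω_n(D) D₀` once `2 ^ n` kills
`D / D₀`; hence `|Ω_n(D) ∩ H| = |H : D₀| · |Ω_n(D) ∩ D₀|` for every `H ≥ D₀`. If `A`
centralizes `D₀`, the two over-offender conditions are then the same inequalities, scaled by
`|Ω_n(D) ∩ D₀|`. If `A` moves some `x ∈ D₀` of order dividing `2 ^ t`, a `2 ^ (n - t)`-th root
`c ∈ D₀` of `x` lies in `Ω_n(D)` and has order `> 2 ^ (n - t)` modulo `C_D(A)`, so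
`|Ω_n(D) : C_{Ω_n(D)}(A)| > 2 ^ (n - t) ≥ |A|` for large `n`, and `A` is no over-offender on
`Ω_n(D)` either. As `G` is finite, only finitely many `A` have to be handled.
-/

open Filter

variable {p : ℕ}

theorem Prufer.exists_nsmul_eq (hp : p.Prime) {x : AddCircle (1 : ℚ)} (hx : x ∈ Prufer p)
    {m : ℕ} (hm : m ≠ 0) : ∃ y ∈ Prufer p, m • y = x := by
  obtain ⟨s, hs⟩ := hx
  obtain ⟨a, u, hu, rfl⟩ := Nat.exists_eq_pow_mul_and_not_dvd hm p hp.one_lt.ne'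
  obtain ⟨α, β, hαβ⟩ : IsCoprime (u : ℤ) ((p ^ s : ℕ) : ℤ) :=
    Int.isCoprime_iff_gcd_eq_one.2 (Nat.Coprime.pow_right s (hp.coprime_iff_not_dvd.2 hu).symm)
  obtain ⟨z, hz⟩ : ∃ z : AddCircle (1 : ℚ), (p ^ a : ℕ) • z = x :=
    ⟨DivisibleBy.div x ((p ^ a : ℕ) : ℤ), by
      rw [← natCast_zsmul, DivisibleBy.div_cancel _ (by exact_mod_cast (pow_pos hp.pos a).ne')]⟩
  have hz0 : (p ^ (s + a) : ℕ) • z = 0 := by rw [pow_add, mul_smul, hz, hs]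
  -- `α • z` is an `m`-th root of `x` because `α u ≡ 1` modulo `p ^ s`
  refine ⟨α • z, ⟨s + a, by rw [smul_comm, hz0, smul_zero]⟩, ?_⟩
  rw [← sub_eq_zero, ← hz, ← natCast_zsmul, ← natCast_zsmul, smul_smul, ← sub_smul,
    show ((p ^ a * u : ℕ) : ℤ) * α - (p ^ a : ℕ) = -β * (p ^ (s + a) : ℕ) by
      push_cast at hαβ ⊢; linear_combination (p : ℤ) ^ a * hαβ,
    mul_smul, natCast_zsmul, hz0, smul_zero]

theorem Prufer.finite_torsion (hp : p ≠ 0) (n : ℕ) :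
    {x : Prufer p | (p ^ n : ℕ) • x = 0}.Finite := by
  refine ((AddCircle.finite_torsion (1 : ℚ) (pow_pos (Nat.pos_of_ne_zero hp) n)).preimage
    Subtype.val_injective.injOn).subset fun x hx => ?_
  simpa using congrArg Subtype.val hx

namespace IsPTorus

variable {T : Type*}

theorem exists_pow_eq [Group T] (hp : p.Prime) (hT : IsPTorus p T) (x : T) {m : ℕ}
    (hm : m ≠ 0) : ∃ y : T, y ^ m = x := by
  obtain ⟨r, ⟨e⟩⟩ := hT
  have hroot (i : Fin r) : ∃ w : Prufer p, m • w = (e x).toAdd i := by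
    obtain ⟨y, hy, hmy⟩ := Prufer.exists_nsmul_eq hp ((e x).toAdd i).2 hm
    exact ⟨⟨y, hy⟩, Subtype.ext hmy⟩
  choose w hw using hroot
  refine ⟨e.symm (.ofAdd w), e.injective ?_⟩
  rw [map_pow, e.apply_symm_apply, ← ofAdd_nsmul, show m • w = (e x).toAdd from funext hw,
    ofAdd_toAdd]

theorem isPGroup [Group T] (hT : IsPTorus p T) : IsPGroup p T := by
  obtain ⟨r, ⟨e⟩⟩ := hT
  refine IsPGroup.of_equiv (fun f => ?_) e.symm
  have hf (i : Fin r) : ∀ᶠ s in atTop, (p ^ s : ℕ) • f.toAdd i = 0 := by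
    obtain ⟨t, ht⟩ := (f.toAdd i).2
    filter_upwards [eventually_ge_atTop t] with s hs
    apply Subtype.ext
    rw [← Nat.sub_add_cancel hs, pow_add, AddSubgroup.coe_nsmul, mul_smul, ht, smul_zero]
    rfl
  obtain ⟨s, hs⟩ := (eventually_all.2 hf).exists
  exact ⟨s, Multiplicative.toAdd.injective (funext hs)⟩

theorem finite_omega [CommGroup T] (hp : p ≠ 0) (hT : IsPTorus p T) (n : ℕ) :
    Finite (Omega p n T) := by
  obtain ⟨r, ⟨e⟩⟩ := hT
  have := (Prufer.finite_torsion hp n).to_subtype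
  have hmem (x : Omega p n T) (i : Fin r) : (p ^ n : ℕ) • (e x).toAdd i = 0 := by
    rw [← Pi.smul_apply, ← toAdd_pow, ← map_pow, x.2, map_one]
    rfl
  exact Finite.of_injective (fun x i => (⟨_, hmem x i⟩ : {w : Prufer p | (p ^ n : ℕ) • w = 0}))
    fun x y hxy => Subtype.ext (e.injective (Multiplicative.toAdd.injective (funext fun i =>
      congrArg Subtype.val (congrFun hxy i))))

end IsPTorus

def Subgroup.IsDivisible {D : Type*} [Group D] (H : Subgroup D) : Prop :=
  ∀ x ∈ H, ∀ n : ℕ, n ≠ 0 → ∃ y ∈ H, y ^ n = x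

theorem Subgroup.card_eq_card_inf_mul_relIndex {D : Type*} [Group D] (H K : Subgroup D) :
    Nat.card K = Nat.card ↥(H ⊓ K) * H.relIndex K := by
  simpa [Subgroup.relIndex_bot_left] using (Subgroup.relIndex_inf_mul_relIndex ⊥ H K).symm

section CommGroup

variable {D : Type*} [CommGroup D]

theorem card_inf_eq_relIndex_mul_card_inf {X Y H : Subgroup D} (hXY : X ⊔ Y = ⊤)
    (hYH : Y ≤ H) : Nat.card ↥(X ⊓ H) = Y.relIndex H * Nat.card ↥(X ⊓ Y) := by
  have hH : X ⊓ H ⊔ Y = H := by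
    rw [sup_comm, ← sup_inf_assoc_of_le X hYH, sup_comm, hXY, top_inf_eq]
  rw [Y.card_eq_card_inf_mul_relIndex (X ⊓ H), ← Subgroup.relIndex_sup_right (X ⊓ H) Y, hH,
    inf_left_comm, inf_eq_left.2 hYH, mul_comm]

theorem pow_lt_relIndex_of_pow_notMem (hp : p.Prime) {K L : Subgroup D} {c : D} (hcL : c ∈ L)
    {m n : ℕ} (hc : c ^ p ^ n = 1) (hcK : c ^ p ^ m ∉ K) (hKL : K.relIndex L ≠ 0) :
    p ^ m < K.relIndex L := by
  set c' : L ⧸ K.subgroupOf L := QuotientGroup.mk ⟨c, hcL⟩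
  have hpow (j : ℕ) : c' ^ j = 1 ↔ c ^ j ∈ K := by
    rw [← QuotientGroup.mk_pow, QuotientGroup.eq_one_iff, Subgroup.mem_subgroupOf]
    rfl
  obtain ⟨i, -, hi⟩ :=
    (Nat.dvd_prime_pow hp).1 (orderOf_dvd_of_pow_eq_one ((hpow _).2 (hc ▸ K.one_mem)))
  have hmi : m < i := by
    by_contra! h
    exact hcK ((hpow _).1 (orderOf_dvd_iff_pow_eq_one.1 (hi ▸ pow_dvd_pow p h)))
  calc p ^ m < p ^ i := Nat.pow_lt_pow_right hp.one_lt hmi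
    _ = orderOf c' := hi.symm
    _ ≤ K.relIndex L := Nat.le_of_dvd (Nat.pos_of_ne_zero hKL) (orderOf_dvd_natCard c')

theorem IsMaxDivisible.isDivisible {D₀ : Subgroup D} (hD₀ : IsMaxDivisible D₀) :
    D₀.IsDivisible :=
  hD₀.1

theorem IsMaxDivisible.le_of_isPTorus (hp : p.Prime) {D₀ T : Subgroup D}
    (hD₀ : IsMaxDivisible D₀) (hT : IsPTorus p T) : T ≤ D₀ :=
  hD₀.2 T fun x hx _ hm =>
    let ⟨y, hy⟩ := hT.exists_pow_eq hp ⟨x, hx⟩ hm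
    ⟨y, y.2, congrArg Subtype.val hy⟩

theorem omega_mono {m n : ℕ} (h : m ≤ n) : Omega p m D ≤ Omega p n D := fun x hx => by
  change x ^ p ^ n = 1
  rw [← Nat.sub_add_cancel h, pow_add, mul_comm, pow_mul, hx, one_pow]

theorem omega_sup_eq_top (hp : p ≠ 0) {D₀ : Subgroup D} (hdiv : D₀.IsDivisible) {k : ℕ}
    (hk : ∀ x : D, x ^ p ^ k ∈ D₀) : Omega p k D ⊔ D₀ = ⊤ := by
  refine eq_top_iff.2 fun x _ => ?_
  obtain ⟨y, hy, hyx⟩ := hdiv _ (hk x) _ (pow_ne_zero k hp)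
  rw [← inv_mul_cancel_right x y]
  exact Subgroup.mul_mem_sup (show (x * y⁻¹) ^ p ^ k = 1 by
    rw [mul_pow, inv_pow, hyx, mul_inv_cancel]) hy

theorem finite_omega_of_isPTorus (hp : p ≠ 0) {T : Subgroup D} (hT : IsPTorus p T)
    (hTi : T.index ≠ 0) (n : ℕ) : Finite (Omega p n D) := by
  have := hT.finite_omega hp n
  have : Finite ↥(T ⊓ Omega p n D) :=
    Finite.of_injective (fun x => (⟨⟨x, x.2.1⟩, Subtype.ext x.2.2⟩ : Omega p n T))
      fun x y hxy => Subtype.ext (congrArg (fun z => (z.1 : D)) hxy)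
  refine Nat.finite_of_card_ne_zero ?_
  rw [Subgroup.card_eq_card_inf_mul_relIndex T]
  exact mul_ne_zero Nat.card_pos.ne' (ne_zero_of_dvd_ne_zero hTi (T.relIndex_dvd_index_of_normal _))

end CommGroup

namespace IsDiscretePToral

variable {D : Type*} [CommGroup D]

theorem isPGroup (hD : IsDiscretePToral p D) : IsPGroup p D := by
  obtain ⟨T, -, hT, k, hk⟩ := hD
  intro x
  obtain ⟨t, ht⟩ := hT.isPGroup ⟨_, T.pow_index_mem x⟩
  refine ⟨k + t, ?_⟩
  rw [pow_add, pow_mul, ← show T.index = p ^ k from hk]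
  exact congrArg Subtype.val ht

theorem finite_omega (hp : p ≠ 0) (hD : IsDiscretePToral p D) (n : ℕ) :
    Finite (Omega p n D) := by
  obtain ⟨T, -, hT, k, hk⟩ := hD
  have hTk : T.index = p ^ k := hk
  exact finite_omega_of_isPTorus hp hT (hTk ▸ pow_ne_zero k hp) n

theorem exists_pow_mem (hp : p.Prime) (hD : IsDiscretePToral p D) {D₀ : Subgroup D}
    (hD₀ : IsMaxDivisible D₀) : ∃ k, ∀ x : D, x ^ p ^ k ∈ D₀ := by
  obtain ⟨T, -, hT, k, hk⟩ := hD
  have hTk : T.index = p ^ k := hk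
  exact ⟨k, fun x => hD₀.le_of_isPTorus hp hT (hTk ▸ T.pow_index_mem x)⟩

end IsDiscretePToral

section Offenders

variable {G D : Type*} [Group G] [CommGroup D] [MulDistribMulAction G D]

theorem fixedSub_anti {A B : Set G} (h : B ⊆ A) : fixedSub G D A ≤ fixedSub G D B :=
  fun _ hx a ha => hx a (h ha)

theorem isOverOffenderOn_iff_of_relIndex_eq_mul {W₀ W W₀' W' : Subgroup D} {A : Subgroup G}
    {c : ℕ} (hc : 0 < c) (hW₀ : W₀ ≤ W ⊓ fixedSub G D A) (hW₀' : W₀' ≤ W' ⊓ fixedSub G D A)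
    (hW : W₀'.relIndex W' = W₀.relIndex W * c)
    (hfix : ∀ B ≤ A,
      W₀'.relIndex (W' ⊓ fixedSub G D B) = W₀.relIndex (W ⊓ fixedSub G D B) * c) :
    IsOverOffenderOn p W₀ W A ↔ IsOverOffenderOn p W₀' W' A := by
  have hbest : (∀ B ≤ A, Nat.card B * W₀.relIndex (W ⊓ fixedSub G D B) ≤
        Nat.card A * W₀.relIndex (W ⊓ fixedSub G D A)) ↔
      ∀ B ≤ A, Nat.card B * W₀'.relIndex (W' ⊓ fixedSub G D B) ≤
        Nat.card A * W₀'.relIndex (W' ⊓ fixedSub G D A) :=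
    forall₂_congr fun B hB => by
      rw [hfix B hB, hfix A le_rfl, ← mul_assoc, ← mul_assoc, Nat.mul_le_mul_right_iff hc]
  unfold IsOverOffenderOn IsBestOffenderOn
  rw [hbest, hW, hfix A le_rfl, ← mul_assoc, Nat.mul_lt_mul_right hc]
  simp only [hW₀, hW₀', true_and]

theorem isOverOffenderOn_top_iff_bot_omega (hp : p ≠ 0) {D₀ : Subgroup D}
    (hdiv : D₀.IsDivisible) {k n : ℕ} (hk : ∀ x : D, x ^ p ^ k ∈ D₀) (hn : k ≤ n)
    [Finite (Omega p n D)] {A : Subgroup G} (hA : D₀ ≤ fixedSub G D A) :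
    IsOverOffenderOn p D₀ ⊤ A ↔ IsOverOffenderOn p ⊥ (Omega p n D) A := by
  have hsup : Omega p n D ⊔ D₀ = ⊤ :=
    top_le_iff.1 ((omega_sup_eq_top hp hdiv hk).ge.trans (sup_le_sup_right (omega_mono hn) _))
  have hcard (H : Subgroup D) (hH : D₀ ≤ H) : (⊥ : Subgroup D).relIndex (Omega p n D ⊓ H) =
      D₀.relIndex (⊤ ⊓ H) * Nat.card ↥(Omega p n D ⊓ D₀) := by
    rw [Subgroup.relIndex_bot_left, top_inf_eq, card_inf_eq_relIndex_mul_card_inf hsup hH]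
  have : Finite ↥(Omega p n D ⊓ D₀) :=
    Finite.of_injective _ (Subgroup.inclusion_injective inf_le_left)
  exact isOverOffenderOn_iff_of_relIndex_eq_mul Nat.card_pos (le_inf le_top hA) bot_le
    (by simpa using hcard ⊤ le_top) fun B hB => hcard _ (hA.trans (fixedSub_anti hB))

theorem not_isOverOffenderOn_bot_of_pow_notMem (hp : p.Prime) {W : Subgroup D} [Finite W]
    {A : Subgroup G} {c : D} (hcW : c ∈ W) {m n : ℕ} (hc : c ^ p ^ n = 1)
    (hcA : c ^ p ^ m ∉ fixedSub G D A) (hm : Nat.card A ≤ m) :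
    ¬ IsOverOffenderOn p ⊥ W A := by
  rintro ⟨-, hover⟩
  set K := fixedSub G D A
  rw [Subgroup.relIndex_bot_left, Subgroup.relIndex_bot_left, K.card_eq_card_inf_mul_relIndex,
    inf_comm, mul_comm] at hover
  have hA : K.relIndex W < Nat.card A := lt_of_mul_lt_mul_right hover (Nat.zero_le _)
  exact lt_irrefl _ <| calc
    Nat.card A < p ^ Nat.card A := Nat.lt_pow_self hp.one_lt
    _ ≤ p ^ m := Nat.pow_le_pow_right hp.pos hm
    _ < K.relIndex W :=
      pow_lt_relIndex_of_pow_notMem hp hcW hc hcA (K.subgroupOf W).index_ne_zero_of_finite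
    _ < Nat.card A := hA

theorem eventually_not_isOverOffenderOn_bot_omega (hp : p.Prime) {D₀ : Subgroup D}
    (hdiv : D₀.IsDivisible) (hD : IsPGroup p D) (hfin : ∀ n, Finite (Omega p n D))
    {A : Subgroup G} (hA : ¬ D₀ ≤ fixedSub G D A) :
    ∀ᶠ n in atTop, ¬ IsOverOffenderOn p ⊥ (Omega p n D) A := by
  obtain ⟨x, hxD₀, hxA⟩ := SetLike.not_le_iff_exists.1 hA
  obtain ⟨t, ht⟩ := hD x
  filter_upwards [eventually_ge_atTop (t + Nat.card A)] with n hn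
  obtain ⟨c, -, rfl⟩ := hdiv x hxD₀ (p ^ (n - t)) (pow_ne_zero _ hp.ne_zero)
  have hc : c ^ p ^ n = 1 := by
    rwa [← Nat.sub_add_cancel (le_of_add_le_left hn), pow_add, pow_mul]
  exact not_isOverOffenderOn_bot_of_pow_notMem hp hc hc hxA (by omega)

end Offenders

theorem overOffenders_eq_overOffenders_omega_general {G D : Type*} [Group G] [Finite G]
    [CommGroup D] [MulDistribMulAction G D]
    (hD : IsDiscretePToral 2 D) (D₀ : Subgroup D) (hD₀ : IsMaxDivisible D₀) :
    ∃ N : ℕ, ∀ n ≥ N, ∀ A : Subgroup G,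
      IsOverOffenderOn 2 D₀ (⊤ : Subgroup D) A ↔
        IsOverOffenderOn 2 (⊥ : Subgroup D) (Omega 2 n D) A := by
  have hfin := hD.finite_omega two_ne_zero
  obtain ⟨k, hk⟩ := hD.exists_pow_mem Nat.prime_two hD₀
  refine eventually_atTop.1 (eventually_all.2 fun A => ?_)
  by_cases hA : D₀ ≤ fixedSub G D A
  · filter_upwards [eventually_ge_atTop k] with n hn
    exact isOverOffenderOn_top_iff_bot_omega two_ne_zero hD₀.isDivisible hk hn hA
  · filter_upwards [eventually_not_isOverOffenderOn_bot_omega Nat.prime_two hD₀.isDivisible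
      hD.isPGroup hfin hA] with n hn
    exact iff_of_false (fun h => hA (h.1.2.2.1.trans inf_le_right)) hn

/-- For a finite group `G` acting faithfully on an abelian discrete
`2`-toral group `D`, for all sufficiently large `n` the over-offenders of `G` on `D`
coincide with the over-offenders of `G` on `Ω_n(D)` (whose identity component is
trivial). -/
theorem overOffenders_eq_overOffenders_omega {G D : Type*} [Group G] [Finite G]
    [CommGroup D] [MulDistribMulAction G D] [FaithfulSMul G D]
    (hD : IsDiscretePToral 2 D) (D₀ : Subgroup D) (hD₀ : IsMaxDivisible D₀) :
    ∃ N : ℕ, ∀ n ≥ N, ∀ A : Subgroup G,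
      IsOverOffenderOn 2 D₀ (⊤ : Subgroup D) A ↔
        IsOverOffenderOn 2 (⊥ : Subgroup D) (Omega 2 n D) A :=
  overOffenders_eq_overOffenders_omega_general hD D₀ hD₀
end

section
/- Let F be a saturated fusion system over a discrete p-toral group S and let P ≤ S be fully automized and receptive in F. Then for every Q that is F-conjugate to P, there exists a morphism φ ∈ Hom_F(N_S(Q), N_S(P)) with φ(Q) = P. -/
open scoped Pointwise

/-- A fusion system over a (discrete `p`-toral) group `S`: a collection of injective
group homomorphisms between subgroups of `S` (recorded as homomorphisms into `S`),
containing all conjugation maps and closed under composition, restriction and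
inverses of isomorphisms. -/
structure FusionSystem (S : Type*) [Group S] where
  /-- `IsMor P φ` means `φ : P → S` is a morphism of the fusion system
  (with target the subgroup `φ.range`). -/
  IsMor : (P : Subgroup S) → (↥P →* S) → Prop
  inj : ∀ (P : Subgroup S) (φ : ↥P →* S), IsMor P φ → Function.Injective φ
  conj_isMor : ∀ (P : Subgroup S) (g : S),
    IsMor P ((MulAut.conj g).toMonoidHom.comp P.subtype)
  comp_isMor : ∀ (P Q : Subgroup S) (φ : ↥P →* S) (ψ : ↥Q →* S)
    (h : ∀ x : ↥P, φ x ∈ Q), IsMor P φ → IsMor Q ψ →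
    IsMor P (ψ.comp (φ.codRestrict Q h))
  restrict_isMor : ∀ (P P' : Subgroup S) (h : P' ≤ P) (φ : ↥P →* S),
    IsMor P φ → IsMor P' (φ.comp (Subgroup.inclusion h))
  inv_isMor : ∀ (P Q : Subgroup S) (φ : ↥P →* S), IsMor P φ → φ.range = Q →
    ∃ ψ : ↥Q →* S, IsMor Q ψ ∧ ∀ (x : ↥P) (hx : φ x ∈ Q), ψ ⟨φ x, hx⟩ = x

namespace FusionSystem

variable {S : Type*} [Group S] (F : FusionSystem S)

/-- `Q` is `F`-conjugate to `P`. -/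
def IsConjTo (Q P : Subgroup S) : Prop :=
  ∃ φ : ↥Q →* S, F.IsMor Q φ ∧ φ.range = P

end FusionSystem

namespace FusionSystem

variable {S : Type*} [Group S]

/-- The group `Aut_F(P)` of `F`-automorphisms of `P`, as a subgroup of `MulAut P`. -/
def autF (F : FusionSystem S) (P : Subgroup S) : Subgroup (MulAut ↥P) where
  carrier := {α | F.IsMor P (P.subtype.comp α.toMonoidHom)}
  one_mem' := by
    have h := F.conj_isMor P 1
    have e : (MulAut.conj (1 : S)).toMonoidHom.comp P.subtype
        = P.subtype.comp (MulEquiv.toMonoidHom (1 : MulAut ↥P)) := by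
      ext x; simp
    rwa [e] at h
  mul_mem' := by
    intro α β hα hβ
    have h := F.comp_isMor P P (P.subtype.comp β.toMonoidHom)
      (P.subtype.comp α.toMonoidHom) (fun x => (β x).2) hβ hα
    have e : (P.subtype.comp α.toMonoidHom).comp
        ((P.subtype.comp β.toMonoidHom).codRestrict P (fun x => (β x).2))
        = P.subtype.comp (α * β).toMonoidHom := by
      ext x; rfl
    rwa [e] at h
  inv_mem' := by
    intro α hα
    have hr : (P.subtype.comp α.toMonoidHom).range = P := by
      ext y
      constructor
      · rintro ⟨x, rfl⟩
        exact (α x).2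
      · intro hy
        exact ⟨α⁻¹ ⟨y, hy⟩, by simp [MulAut.inv_def]⟩
    obtain ⟨ψ, hψmor, hψ⟩ := F.inv_isMor P P (P.subtype.comp α.toMonoidHom) hα hr
    have e : P.subtype.comp (α⁻¹).toMonoidHom = ψ := by
      ext x
      have hx : (P.subtype.comp α.toMonoidHom) (α⁻¹ x) ∈ P := (α (α⁻¹ x)).2
      have h1 := hψ (α⁻¹ x) hx
      have h2 : (⟨(P.subtype.comp α.toMonoidHom) (α⁻¹ x), hx⟩ : ↥P) = x := by
        ext
        simp [MulAut.inv_def]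
      rw [h2] at h1
      simpa using h1.symm
    rw [← e] at hψmor
    exact hψmor

end FusionSystem

/-- The subgroup `Aut_S(P) ≤ MulAut P` of automorphisms induced by conjugation by
elements of `N_S(P)`. -/
def autS (S : Type*) [Group S] (P : Subgroup S) : Subgroup (MulAut ↥P) where
  carrier := {α | ∃ g ∈ (Subgroup.normalizer (P : Set S)), ∀ x : ↥P, (α x : S) = g * x * g⁻¹}
  one_mem' := ⟨1, one_mem _, fun x => by simp⟩
  mul_mem' := by
    rintro α β ⟨g, hg, hgα⟩ ⟨h, hh, hhβ⟩
    refine ⟨g * h, mul_mem hg hh, fun x => ?_⟩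
    have h1 := hgα (β x)
    have h2 := hhβ x
    simp only [MulAut.mul_apply]
    rw [h1, h2]
    group
  inv_mem' := by
    rintro α ⟨g, hg, hgα⟩
    refine ⟨g⁻¹, inv_mem hg, fun x => ?_⟩
    have h1 := hgα (α⁻¹ x)
    have h2 : (x : S) = g * (α⁻¹ x : S) * g⁻¹ := by
      rw [← h1]
      simp [MulAut.inv_def]
    rw [h2]
    group

/-- The torus rank of a group: the supremum of the ranks of its discrete `p`-torus
subgroups. -/
noncomputable def torusRank (p : ℕ) (G : Type*) [Group G] : ℕ :=
  sSup {r : ℕ | ∃ T : Subgroup G, Nonempty (↥T ≃* Multiplicative (Fin r → Prufer p))}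

/-- Comparison of orders of virtually discrete `p`-toral groups:
`ord(G) = (rk(G₀), |G/G₀|) ≤ ord(H)` lexicographically. -/
def ordLE (p : ℕ) (G : Type*) [Group G] (H : Type*) [Group H] : Prop :=
  torusRank p G < torusRank p H ∨
    (torusRank p G = torusRank p H ∧
      Nat.card (G ⧸ identityComponent p G) ≤ Nat.card (H ⧸ identityComponent p H))

namespace FusionSystem

variable {S : Type*} [Group S]

/-- `P` is fully normalized in `F`: `|N_S(Q)| ≤ |N_S(P)|` for every `F`-conjugate
`Q` of `P`. -/
def FullyNormalized (p : ℕ) (F : FusionSystem S) (P : Subgroup S) : Prop :=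
  ∀ Q : Subgroup S, F.IsConjTo Q P → ordLE p ↥(Subgroup.normalizer (Q : Set S)) ↥(Subgroup.normalizer (P : Set S))

/-- `P` is fully centralized in `F`: `|C_S(Q)| ≤ |C_S(P)|` for every `F`-conjugate
`Q` of `P`. -/
def FullyCentralized (p : ℕ) (F : FusionSystem S) (P : Subgroup S) : Prop :=
  ∀ Q : Subgroup S, F.IsConjTo Q P →
    ordLE p ↥(Subgroup.centralizer (Q : Set S)) ↥(Subgroup.centralizer (P : Set S))

/-- `P` is fully automized in `F`: `Out_F(P)` is finite and `Out_S(P)` is a Sylow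
`p`-subgroup of `Out_F(P)` (phrased via indices over the inner automorphisms). -/
def FullyAutomized (p : ℕ) (F : FusionSystem S) (P : Subgroup S) : Prop :=
  autS S P ≤ F.autF P ∧
    ((MulAut.conj : ↥P →* MulAut ↥P).range.relIndex (F.autF P) ≠ 0) ∧
    (∀ α ∈ autS S P, ∃ k : ℕ,
      α ^ p ^ k ∈ (MulAut.conj : ↥P →* MulAut ↥P).range) ∧
    ¬ p ∣ (autS S P).relIndex (F.autF P)

end FusionSystem

/-- The subgroup `N_φ ≤ N_S(Q)` of elements whose conjugation action is transported
by `φ` into `Aut_S(P)`. -/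
def Nphi {S : Type*} [Group S] (Q P : Subgroup S) (φ : ↥Q →* S) : Subgroup S where
  carrier := {g : S | ∃ hg : g ∈ (Subgroup.normalizer (Q : Set S)), ∃ h ∈ (Subgroup.normalizer (P : Set S)),
    ∀ (x : S) (hx : x ∈ Q),
      φ ⟨g * x * g⁻¹, (Subgroup.mem_normalizer_iff.mp hg x).mp hx⟩
        = h * φ ⟨x, hx⟩ * h⁻¹}
  one_mem' := by
    refine ⟨one_mem _, 1, one_mem _, ?_⟩
    intro x hx
    have e : (⟨1 * x * 1⁻¹, (Subgroup.mem_normalizer_iff.mp (one_mem _) x).mp hx⟩ : ↥Q)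
        = ⟨x, hx⟩ := by
      ext; group
    rw [e]
    group
  mul_mem' := by
    rintro g₁ g₂ ⟨hg₁, h₁, hh₁, H₁⟩ ⟨hg₂, h₂, hh₂, H₂⟩
    refine ⟨mul_mem hg₁ hg₂, h₁ * h₂, mul_mem hh₁ hh₂, ?_⟩
    intro x hx
    have hx2 : g₂ * x * g₂⁻¹ ∈ Q := (Subgroup.mem_normalizer_iff.mp hg₂ x).mp hx
    have e : (⟨g₁ * g₂ * x * (g₁ * g₂)⁻¹,
        (Subgroup.mem_normalizer_iff.mp (mul_mem hg₁ hg₂) x).mp hx⟩ : ↥Q)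
        = ⟨g₁ * (g₂ * x * g₂⁻¹) * g₁⁻¹,
          (Subgroup.mem_normalizer_iff.mp hg₁ _).mp hx2⟩ := by
      ext; group
    rw [e, H₁ _ hx2, H₂ x hx]
    group
  inv_mem' := by
    rintro g ⟨hg, h, hh, H⟩
    refine ⟨inv_mem hg, h⁻¹, inv_mem hh, ?_⟩
    intro x hx
    have hx2 : g⁻¹ * x * g⁻¹⁻¹ ∈ Q :=
      (Subgroup.mem_normalizer_iff.mp (inv_mem hg) x).mp hx
    have h1 := H (g⁻¹ * x * g⁻¹⁻¹) hx2
    have e : (⟨g * (g⁻¹ * x * g⁻¹⁻¹) * g⁻¹,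
        (Subgroup.mem_normalizer_iff.mp hg _).mp hx2⟩ : ↥Q) = ⟨x, hx⟩ := by
      ext; group
    rw [e] at h1
    show φ ⟨g⁻¹ * x * g⁻¹⁻¹, hx2⟩ = h⁻¹ * φ ⟨x, hx⟩ * h⁻¹⁻¹
    rw [h1]
    group

namespace FusionSystem

variable {S : Type*} [Group S]

/-- `P` is receptive in `F`: every `F`-isomorphism onto `P` extends to `N_φ`. -/
def Receptive (F : FusionSystem S) (P : Subgroup S) : Prop :=
  ∀ (Q : Subgroup S) (φ : ↥Q →* S), F.IsMor Q φ → φ.range = P →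
    ∃ ψ : ↥(Nphi Q P φ) →* S, F.IsMor (Nphi Q P φ) ψ ∧
      (∀ y : ↥(Nphi Q P φ), ψ y ∈ (Subgroup.normalizer (P : Set S))) ∧
      ∀ (x : S) (hx : x ∈ Q) (hx' : x ∈ Nphi Q P φ), ψ ⟨x, hx'⟩ = φ ⟨x, hx⟩

/-- The saturation axioms for a fusion system over a discrete `p`-toral group. -/
def IsSaturated (p : ℕ) (F : FusionSystem S) : Prop :=
  (∀ P : Subgroup S, F.FullyNormalized p P →
      F.FullyCentralized p P ∧ F.FullyAutomized p P) ∧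
    (∀ P : Subgroup S, F.FullyCentralized p P → F.Receptive P) ∧
    (∀ P : ℕ → Subgroup S, (∀ i, P i ≤ P (i + 1)) →
      ∀ φ : ↥(⨆ i, P i) →* S,
        (∀ i, F.IsMor (P i) (φ.comp (Subgroup.inclusion (le_iSup P i)))) →
          F.IsMor (⨆ i, P i) φ)

end FusionSystem

/-!
Transport `Aut_S(Q)` along an `F`-isomorphism `φ : Q ≅ P`: it becomes a `p`-subgroup of
`Aut_F(P)`. As `Out_S(P)` is a Sylow `p`-subgroup of `Out_F(P)` and `Inn(P) ≤ Aut_S(P)`, some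
`χ ∈ Aut_F(P)` conjugates it into `Aut_S(P)`. For `χ ∘ φ` the whole of `N_S(Q)` then lies in
`N_{χ ∘ φ}`, so receptivity of `P` extends `χ ∘ φ` to `N_S(Q)`.
-/

theorem IsPGroup.pi {p : ℕ} {ι : Type*} [Finite ι] {G : ι → Type*} [∀ i, Group (G i)]
    (hG : ∀ i, IsPGroup p (G i)) : IsPGroup p (∀ i, G i) := by
  intro g
  choose k hk using fun i => hG i (g i)
  have := Fintype.ofFinite ι
  refine ⟨Finset.univ.sup k, funext fun i => ?_⟩
  obtain ⟨c, hc⟩ := pow_dvd_pow p (Finset.le_sup (Finset.mem_univ i) : k i ≤ Finset.univ.sup k)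
  rw [Pi.pow_apply, hc, pow_mul, hk i, one_pow, Pi.one_apply]

theorem isPGroup_prufer (p : ℕ) : IsPGroup p (Multiplicative (Prufer p)) := by
  intro x
  obtain ⟨n, hn⟩ := (Multiplicative.toAdd x).2
  exact ⟨n, Multiplicative.toAdd.injective (Subtype.ext hn)⟩

theorem IsPTorus.isPGroup_s19 {p : ℕ} {T : Type*} [Group T] (hT : IsPTorus p T) : IsPGroup p T := by
  obtain ⟨r, ⟨e⟩⟩ := hT
  exact (IsPGroup.pi fun _ => isPGroup_prufer p).of_equiv
    (e.trans (MulEquiv.funMultiplicative _ _)).symm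

theorem IsDiscretePToral.isPGroup_s19 {p : ℕ} {G : Type*} [Group G] (hG : IsDiscretePToral p G) :
    IsPGroup p G := by
  obtain ⟨T, _, hT, k, hk⟩ := hG
  have hker : IsPGroup p (QuotientGroup.mk' T).ker := by
    rw [QuotientGroup.ker_mk']
    exact hT.isPGroup_s19
  exact ((IsPGroup.of_card hk).to_subgroup ⊤ |>.comap_of_ker_isPGroup _ hker).of_equiv
    Subgroup.topEquiv

theorem autS_eq_range_normalizerMonoidHom {S : Type*} [Group S] (Q : Subgroup S) :
    autS S Q = Q.normalizerMonoidHom.range := by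
  ext α
  constructor
  · rintro ⟨g, hg, hα⟩
    exact ⟨⟨g, hg⟩, MulEquiv.ext fun x => Subtype.ext (hα x).symm⟩
  · rintro ⟨g, rfl⟩
    exact ⟨g, g.2, fun x => rfl⟩

theorem IsPGroup.autS {p : ℕ} {S : Type*} [Group S] (hS : IsPGroup p S) (Q : Subgroup S) :
    IsPGroup p (autS S Q) := by
  rw [autS_eq_range_normalizerMonoidHom]
  exact (hS.to_subgroup _).of_surjective _ Q.normalizerMonoidHom.rangeRestrict_surjective

theorem range_conj_le_autS {S : Type*} [Group S] (P : Subgroup S) :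
    (MulAut.conj : P →* MulAut P).range ≤ autS S P := by
  rintro _ ⟨x, rfl⟩
  exact ⟨x, Subgroup.le_normalizer x.2, fun _ => rfl⟩

instance MulAut.normal_range_conj (G : Type*) [Group G] :
    (MulAut.conj : G →* MulAut G).range.Normal where
  conj_mem := by
    rintro _ ⟨x, rfl⟩ σ
    exact ⟨σ x, MulEquiv.ext fun y => by simp⟩

theorem IsPGroup.exists_conj_mem_of_not_dvd_index {p : ℕ} [Fact p.Prime] {G : Type*} [Group G]
    {T H : Subgroup G} (hT : IsPGroup p T) (hTindex : ¬ p ∣ T.index) (hH : IsPGroup p H) :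
    ∃ g : G, ∀ h ∈ H, g * h * g⁻¹ ∈ T := by
  let T' := hT.toSylow hTindex
  have : T'.FiniteIndex := ⟨fun h => hTindex (h ▸ dvd_zero p)⟩
  have := T'.finite_of_finiteIndex
  obtain ⟨H', hHH'⟩ := hH.exists_le_sylow
  obtain ⟨g, hg⟩ := MulAction.exists_smul_eq G H' T'
  refine ⟨g, fun h hh => ?_⟩
  have : g * h * g⁻¹ ∈ ((g • H' : Sylow p G) : Subgroup G) := by
    rw [Sylow.coe_subgroup_smul]
    exact (Subgroup.mem_smul_pointwise_iff_exists _ _ _).mpr ⟨h, hHH' hh, rfl⟩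
  rwa [hg] at this

theorem exists_conj_mem_of_not_dvd_index_of_pow_mem {p : ℕ} [Fact p.Prime] {G : Type*}
    [Group G] {N T H : Subgroup G} [N.Normal] (hNT : N ≤ T) (hT : ∀ t ∈ T, ∃ k, t ^ p ^ k ∈ N)
    (hTindex : ¬ p ∣ T.index) (hH : IsPGroup p H) :
    ∃ g : G, ∀ h ∈ H, g * h * g⁻¹ ∈ T := by
  let π := QuotientGroup.mk' N
  have hker : π.ker ≤ T := by rwa [QuotientGroup.ker_mk']
  have hT' : IsPGroup p (T.map π) := by
    rintro ⟨_, t, ht, rfl⟩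
    obtain ⟨k, hk⟩ := hT t ht
    exact ⟨k, Subtype.ext ((map_pow π t _).symm.trans ((QuotientGroup.eq_one_iff _).mpr hk))⟩
  have hTindex' : ¬ p ∣ (T.map π).index := by
    rwa [Subgroup.index_map_eq _ (QuotientGroup.mk'_surjective N) hker]
  obtain ⟨g', hg'⟩ := hT'.exists_conj_mem_of_not_dvd_index hTindex' (hH.map π)
  obtain ⟨g, rfl⟩ := QuotientGroup.mk'_surjective N g'
  refine ⟨g, fun h hh => ?_⟩
  rw [← Subgroup.comap_map_eq_self hker, Subgroup.mem_comap, map_mul, map_mul, map_inv]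
  exact hg' (π h) ⟨h, hh, rfl⟩

namespace FusionSystem

variable {S : Type*} [Group S] {F : FusionSystem S} {Q P R : Subgroup S}

def IsIso (F : FusionSystem S) (e : Q ≃* P) : Prop :=
  F.IsMor Q (P.subtype.comp e.toMonoidHom)

theorem mem_autF_iff_isIso {α : MulAut P} : α ∈ F.autF P ↔ F.IsIso α :=
  Iff.rfl

theorem IsIso.trans {e₁ : Q ≃* P} {e₂ : P ≃* R} (h₁ : F.IsIso e₁) (h₂ : F.IsIso e₂) :
    F.IsIso (e₁.trans e₂) :=
  F.comp_isMor Q P _ _ (fun x => (e₁ x).2) h₁ h₂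

theorem range_subtype_comp_mulEquiv (e : Q ≃* P) : (P.subtype.comp e.toMonoidHom).range = P := by
  rw [MonoidHom.range_comp, MonoidHom.range_eq_top_of_surjective _ e.surjective,
    ← MonoidHom.range_eq_map, Subgroup.range_subtype]

theorem IsIso.symm {e : Q ≃* P} (h : F.IsIso e) : F.IsIso e.symm := by
  obtain ⟨ψ, hψ, hψe⟩ := F.inv_isMor Q P _ h (range_subtype_comp_mulEquiv e)
  unfold IsIso
  convert hψ using 1
  ext y
  simpa using (hψe (e.symm y) (by simp)).symm

theorem IsConjTo.exists_isIso (h : F.IsConjTo Q P) : ∃ e : Q ≃* P, F.IsIso e := by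
  obtain ⟨φ, hφ, hrange⟩ := h
  let e := (MonoidHom.ofInjective (F.inj Q φ hφ)).trans (MulEquiv.subgroupCongr hrange)
  exact ⟨e, by unfold IsIso; convert hφ; ext; rfl⟩

theorem autS_le_autF : autS S P ≤ F.autF P := by
  rintro α ⟨g, -, hα⟩
  rw [mem_autF_iff_isIso, IsIso]
  convert F.conj_isMor P g
  ext x
  exact hα x

theorem IsIso.congr_mem_autF {e : Q ≃* P} (he : F.IsIso e) {α : MulAut Q}
    (hα : α ∈ F.autF Q) : MulAut.congr e α ∈ F.autF P :=
  he.symm.trans ((mem_autF_iff_isIso.mp hα).trans he)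

section Sylow

variable {p : ℕ} [Fact p.Prime]

theorem FullyAutomized.exists_conj_mem_autS (hfa : F.FullyAutomized p P)
    {H : Subgroup (MulAut P)} (hHA : H ≤ F.autF P) (hH : IsPGroup p H) :
    ∃ χ ∈ F.autF P, ∀ α ∈ H, χ * α * χ⁻¹ ∈ autS S P := by
  obtain ⟨-, -, hpow, hindex⟩ := hfa
  have : ((MulAut.conj : P →* MulAut P).range.subgroupOf (F.autF P)).Normal :=
    (MulAut.normal_range_conj P).subgroupOf _
  obtain ⟨⟨χ, hχ⟩, hconj⟩ := exists_conj_mem_of_not_dvd_index_of_pow_mem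
    (N := (MulAut.conj : P →* MulAut P).range.subgroupOf (F.autF P))
    (T := (autS S P).subgroupOf (F.autF P)) (H := H.subgroupOf (F.autF P))
    (fun _ h => range_conj_le_autS P h) (fun t ht => hpow t ht) hindex
    hH.comap_subtype
  exact ⟨χ, hχ, fun α hα => hconj ⟨α, hHA hα⟩ hα⟩

theorem IsIso.exists_isIso_congr_autS_le (hS : IsPGroup p S) (hfa : F.FullyAutomized p P)
    {e : Q ≃* P} (he : F.IsIso e) :
    ∃ e' : Q ≃* P, F.IsIso e' ∧ ∀ α ∈ autS S Q, MulAut.congr e' α ∈ autS S P := by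
  obtain ⟨χ, hχ, hconj⟩ := hfa.exists_conj_mem_autS (H := (autS S Q).map (MulAut.congr e))
    (by rintro _ ⟨α, hα, rfl⟩; exact he.congr_mem_autF (autS_le_autF hα))
    ((hS.autS Q).map _)
  exact ⟨e.trans χ, he.trans hχ, fun α hα => hconj _ ⟨α, hα, rfl⟩⟩

end Sylow

theorem normalizer_le_Nphi {e : Q ≃* P}
    (he : ∀ α ∈ autS S Q, MulAut.congr e α ∈ autS S P) :
    Subgroup.normalizer (Q : Set S) ≤ Nphi Q P (P.subtype.comp e.toMonoidHom) := by
  intro g hg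
  obtain ⟨h, hh, hα⟩ := he (Q.normalizerMonoidHom ⟨g, hg⟩) ⟨g, hg, fun _ => rfl⟩
  exact ⟨hg, h, hh, fun x hx => by
    have := hα (e ⟨x, hx⟩)
    simp only [MulAut.congr_apply, MulEquiv.trans_apply, MulEquiv.symm_apply_apply] at this
    exact this⟩

theorem Receptive.exists_extension_normalizer (hrec : F.Receptive P) {e : Q ≃* P}
    (he : F.IsIso e)
    (hN : Subgroup.normalizer (Q : Set S) ≤ Nphi Q P (P.subtype.comp e.toMonoidHom)) :
    ∃ ψ : ↥(Subgroup.normalizer (Q : Set S)) →* S, F.IsMor (Subgroup.normalizer (Q : Set S)) ψ ∧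
      (∀ y : ↥(Subgroup.normalizer (Q : Set S)), ψ y ∈ Subgroup.normalizer (P : Set S)) ∧
      (Q.subgroupOf (Subgroup.normalizer (Q : Set S))).map ψ = P := by
  obtain ⟨ψ, hψ, hψN, hψe⟩ := hrec Q _ he (range_subtype_comp_mulEquiv e)
  refine ⟨ψ.comp (Subgroup.inclusion hN), F.restrict_isMor _ _ hN ψ hψ, fun _ => hψN _, ?_⟩
  have hψQ : (ψ.comp (Subgroup.inclusion hN)).comp (Subgroup.inclusion Subgroup.le_normalizer) =
      P.subtype.comp e.toMonoidHom :=
    MonoidHom.ext fun x => hψe x x.2 _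
  rw [← Subgroup.inclusion_range Subgroup.le_normalizer, MonoidHom.map_range, hψQ,
    range_subtype_comp_mulEquiv]

end FusionSystem

theorem exists_hom_of_normalizers_of_fullyAutomized_receptive_general (p : ℕ) (hp : p.Prime)
    {S : Type*} [Group S] (hS : IsDiscretePToral p S)
    (F : FusionSystem S)
    (P : Subgroup S) (hfa : F.FullyAutomized p P) (hrec : F.Receptive P)
    (Q : Subgroup S) (hQP : F.IsConjTo Q P) :
    ∃ ψ : ↥(Subgroup.normalizer (Q : Set S)) →* S, F.IsMor (Subgroup.normalizer (Q : Set S)) ψ ∧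
      (∀ y : ↥(Subgroup.normalizer (Q : Set S)), ψ y ∈ (Subgroup.normalizer (P : Set S))) ∧
      (Q.subgroupOf (Subgroup.normalizer (Q : Set S))).map ψ = P := by
  have := Fact.mk hp
  obtain ⟨e, he⟩ := hQP.exists_isIso
  obtain ⟨e', he', hconj⟩ := he.exists_isIso_congr_autS_le hS.isPGroup_s19 hfa
  exact hrec.exists_extension_normalizer he' (FusionSystem.normalizer_le_Nphi hconj)

/-- Let `F` be a saturated fusion system over a discrete `p`-toral
group `S` and let `P ≤ S` be fully automized and receptive.  Then for every `Q`
which is `F`-conjugate to `P` there is `φ ∈ Hom_F(N_S(Q), N_S(P))` with `φ(Q) = P`. -/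
theorem exists_hom_of_normalizers_of_fullyAutomized_receptive (p : ℕ) (hp : p.Prime)
    {S : Type*} [Group S] (hS : IsDiscretePToral p S)
    (F : FusionSystem S) (hsat : F.IsSaturated p)
    (P : Subgroup S) (hfa : F.FullyAutomized p P) (hrec : F.Receptive P)
    (Q : Subgroup S) (hQP : F.IsConjTo Q P) :
    ∃ ψ : ↥(Subgroup.normalizer (Q : Set S)) →* S, F.IsMor (Subgroup.normalizer (Q : Set S)) ψ ∧
      (∀ y : ↥(Subgroup.normalizer (Q : Set S)), ψ y ∈ (Subgroup.normalizer (P : Set S))) ∧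
      (Q.subgroupOf (Subgroup.normalizer (Q : Set S))).map ψ = P :=
  exists_hom_of_normalizers_of_fullyAutomized_receptive_general p hp hS F P hfa hrec Q hQP
end
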